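/- arXiv:2008.07562 — 3 statements merged into one kernel-verified Lean document; each statement's English description precedes it below -/
import Mathlib

section
/- Let 0 < λ < 1 and d ≥ 2 be an integer. Define q_i = λ^((d^i − 1)/(d − 1)) for i ≥ 0 (so q_0 = 1). Then for every i ≥ 1, λ·(q_{i−1}^d − q_i^d) = q_i − q_{i+1}; that is, (q_i) is a fixed point of the JSQ(d) mean-field ODE system. -/
lemma jsq_exp_step (d : ℕ) (hd : 2 ≤ d) (i : ℕ) :
    d * ((d ^ i - 1) / (d - 1)) + 1 = (d ^ (i + 1) - 1) / (d - 1) := by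
  have hdvd : (d - 1) ∣ (d ^ i - 1) := by
    simpa using Nat.sub_dvd_pow_sub_pow d 1 i
  have hdvd' : (d - 1) ∣ (d ^ (i + 1) - 1) := by
    simpa using Nat.sub_dvd_pow_sub_pow d 1 (i + 1)
  have h1 : 1 ≤ d ^ i := Nat.one_le_pow _ _ (by omega)
  have hpow : d ^ (i + 1) = d * d ^ i := by ring
  obtain ⟨s, hs⟩ := hdvd
  obtain ⟨t, ht⟩ := hdvd'
  rw [hs, ht, Nat.mul_div_cancel_left _ (by omega : 0 < d - 1),
    Nat.mul_div_cancel_left _ (by omega : 0 < d - 1)]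
  have key : (d - 1) * (d * s + 1) = (d - 1) * t := by
    rw [← ht]
    have h2 : 1 ≤ d * d ^ i := by nlinarith
    zify [h1, hpow, show 1 ≤ d from by omega, h2] at hs ⊢
    nlinarith [hs]
  exact Nat.eq_of_mul_eq_mul_left (by omega) key
/-- The sequence `q i = λ^((d^i - 1)/(d-1))` is a fixed point of the JSQ(d)
mean-field ODE system. -/
theorem jsq_fixed_point (lam : ℝ) (hlam0 : 0 < lam) (hlam1 : lam < 1)
    (d : ℕ) (hd : 2 ≤ d) (q : ℕ → ℝ)
    (hq : ∀ i, q i = lam ^ ((d ^ i - 1) / (d - 1))) :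
    ∀ i, 1 ≤ i → lam * (q (i - 1) ^ d - q i ^ d) = q i - q (i + 1) := by
  intro i hi
  obtain ⟨j, rfl⟩ : ∃ j, i = j + 1 := ⟨i - 1, by omega⟩
  have key : ∀ k, lam * q k ^ d = q (k + 1) := by
    intro k
    rw [hq k, hq (k + 1), ← pow_mul, ← pow_succ']
    congr 1
    rw [mul_comm]
    exact jsq_exp_step d hd k
  simp only [Nat.add_sub_cancel]
  rw [mul_sub, key j, key (j + 1)]
end

section
/- Let 0 < λ < 1 and d ≥ 2 be an integer. Suppose (q_i)_{i≥0} is a sequence with q_0 = 1, q_i ∈ [0,1] for all i, q_i → 0 as i → ∞, and λ(q_{i−1}^d − q_i^d) = q_i − q_{i+1} for all i ≥ 1. Then q_i = λ^((d^i − 1)/(d − 1)) for all i ≥ 0. -/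
/-- Uniqueness of the fixed point of the JSQ(d) mean-field ODE: any `[0,1]`-valued
sequence with `q 0 = 1`, vanishing at infinity, and satisfying the fixed-point
equations must be `q i = λ^((d^i - 1)/(d-1))`. -/
theorem jsq_fixed_point_unique (lam : ℝ) (hlam0 : 0 < lam) (hlam1 : lam < 1)
    (d : ℕ) (hd : 2 ≤ d) (q : ℕ → ℝ)
    (hq0 : q 0 = 1)
    (hbnd : ∀ i, q i ∈ Set.Icc (0 : ℝ) 1)
    (hlim : Filter.Tendsto q Filter.atTop (nhds 0))
    (hfix : ∀ i, 1 ≤ i → lam * (q (i - 1) ^ d - q i ^ d) = q i - q (i + 1)) :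
    ∀ i, q i = lam ^ ((d ^ i - 1) / (d - 1)) := by
  have hdpos : 0 < d - 1 := by omega
  -- arithmetic lemma on exponents
  have hexp : ∀ i : ℕ, (d ^ (i + 1) - 1) / (d - 1) = 1 + d * ((d ^ i - 1) / (d - 1)) := by
    intro i
    obtain ⟨k, hk⟩ : (d - 1) ∣ (d ^ i - 1) := by
      have := Nat.sub_dvd_pow_sub_pow d 1 i
      simpa using this
    have hpow1 : 1 ≤ d ^ i := Nat.one_le_pow _ _ (by omega)
    have h1 : d ^ i - 1 = (d - 1) * k := hk
    have h2 : d ^ (i + 1) - 1 = (d - 1) * (d * k + 1) := by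
      have : d ^ (i + 1) = d * d ^ i := by ring
      nlinarith [Nat.sub_add_cancel hpow1, Nat.sub_add_cancel (show 1 ≤ d by omega),
        Nat.sub_add_cancel (show 1 ≤ d ^ (i+1) from Nat.one_le_pow _ _ (by omega))]
    rw [h1, h2, Nat.mul_div_cancel_left _ hdpos, Nat.mul_div_cancel_left _ hdpos]
    ring
  -- telescoping
  have htel : ∀ i, 1 ≤ i → ∀ N, i ≤ N →
      lam * (q (i - 1) ^ d - q N ^ d) = q i - q (N + 1) := by
    intro i hi N hN
    induction N with
    | zero => omega
    | succ n ih =>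
      rcases Nat.lt_or_ge i (n + 1) with h | h
      · have h1 := ih (by omega)
        have h2 := hfix (n + 1) (by omega)
        simp only [Nat.add_sub_cancel] at h2
        linarith
      · have : i = n + 1 := by omega
        subst this
        exact hfix (n + 1) (by omega)
  -- key recursion
  have key : ∀ i, 1 ≤ i → q i = lam * q (i - 1) ^ d := by
    intro i hi
    have hpow : Filter.Tendsto (fun N => q N ^ d) Filter.atTop (nhds 0) := by
      have := hlim.pow d
      simpa [zero_pow (show d ≠ 0 by omega)] using this
    have h1 : Filter.Tendsto (fun N => lam * (q (i - 1) ^ d - q N ^ d)) Filter.atTop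
        (nhds (lam * (q (i - 1) ^ d - 0))) :=
      (tendsto_const_nhds.sub hpow).const_mul lam
    have h2 : Filter.Tendsto (fun N => q i - q (N + 1)) Filter.atTop (nhds (q i - 0)) :=
      tendsto_const_nhds.sub (hlim.comp (Filter.tendsto_add_atTop_nat 1))
    have heq : ∀ᶠ N in Filter.atTop,
        lam * (q (i - 1) ^ d - q N ^ d) = q i - q (N + 1) :=
      Filter.eventually_atTop.2 ⟨i, fun N hN => htel i hi N hN⟩
    have := tendsto_nhds_unique (h1.congr' heq) h2
    simpa using this.symm
  -- induction
  intro i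
  induction i with
  | zero => simp [hq0, Nat.div_eq_of_lt (by omega : (1:ℕ) - 1 < d - 1)]
  | succ n ih =>
    have h := key (n + 1) (by omega)
    simp only [Nat.add_sub_cancel] at h
    rw [h, ih, hexp n, pow_add, pow_mul, pow_one]
    ring
end

section
/- Let G = (V, W, E) be a bipartite graph with |V| = N, |W| = M. Suppose there exist p ∈ (0,1] and δ > 0 such that (i) every dispatcher degree satisfies |N_w| ≥ pN/2, and (ii) for all subsets U ⊆ V and B ⊆ W, |e(U, B) − p·|U|·|B|| ≤ δ·N·M, where e(U,B) is the number of edges between U and B. Then for every ε > 0 and every U ⊆ V, the number of dispatchers w with ||N_w ∩ U|/|N_w| − |U|/N| ≥ ε is at most 8δM/(εp). In particular, a graph sequence satisfying these hypotheses with δ = δ(N) → 0 and p bounded below is proportionally sparse. -/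
/-- Quantitative quasi-randomness implies proportional sparsity: if every dispatcher
degree is at least `pN/2` and the edge counts `e(U,B)` have discrepancy at most `δNM`,
then for every `ε > 0` and every `U ⊆ V`, at most `8δM/(εp)` dispatchers `w` satisfy
`||N_w ∩ U|/|N_w| − |U|/N| ≥ ε`. -/
theorem quasirandom_implies_proportionally_sparse
    {V W : Type*} [Fintype V] [Fintype W] [DecidableEq V]
    (N M : ℕ) (hN : Fintype.card V = N) (hM : Fintype.card W = M)
    (hNpos : 0 < N) (hMpos : 0 < M)
    (Nw : W → Finset V) (p δ : ℝ) (hp0 : 0 < p) (hp1 : p ≤ 1) (hδ : 0 < δ)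
    (hdeg : ∀ w, p * N / 2 ≤ ((Nw w).card : ℝ))
    (hdisc : ∀ (U : Finset V) (B : Finset W),
      |(∑ w ∈ B, ((Nw w ∩ U).card : ℝ)) - p * U.card * B.card| ≤ δ * N * M) :
    ∀ ε : ℝ, 0 < ε → ∀ U : Finset V,
      ((Finset.univ.filter (fun w : W =>
          ε ≤ |((Nw w ∩ U).card : ℝ) / (Nw w).card - (U.card : ℝ) / N|)).card : ℝ)
        ≤ 8 * δ * M / (ε * p) := by
  intro ε hε U
  have hn : (0:ℝ) < (N:ℝ) := by exact_mod_cast hNpos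
  have hmn : (0:ℝ) < (M:ℝ) := by exact_mod_cast hMpos
  have hcard : (U.card : ℝ) ≤ (N:ℝ) := by
    have := Finset.card_le_univ U
    rw [hN] at this
    exact_mod_cast this
  have hc0 : (0:ℝ) ≤ (U.card : ℝ) := by positivity
  have hdw : ∀ w : W, (0:ℝ) < ((Nw w).card : ℝ) := fun w =>
    lt_of_lt_of_le (by positivity) (hdeg w)
  classical
  set f : W → ℝ := fun w => ((Nw w ∩ U).card : ℝ) / (Nw w).card - (U.card : ℝ) / N with hf
  set Bp := Finset.univ.filter (fun w : W => ε ≤ f w) with hBpdef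
  set Bm := Finset.univ.filter (fun w : W => f w ≤ -ε) with hBmdef
  have hinter : ∀ w : W, (Nw w ∩ (Finset.univ : Finset V)) = Nw w :=
    fun w => Finset.inter_univ _
  have hcN : (U.card : ℝ) / N ≤ 1 := by rw [div_le_one hn]; exact hcard
  have hcN0 : (0:ℝ) ≤ (U.card : ℝ) / N := by positivity
  have hd : ((U.card : ℝ) / N) * (δ * N * M) ≤ δ * N * M :=
    mul_le_of_le_one_left (by positivity) hcN
  -- bound on Bp
  have hBpbound : (Bp.card : ℝ) * (ε * p * N / 2) ≤ 2 * (δ * N * M) := by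
    have hlow : ∀ w ∈ Bp, ((U.card : ℝ) / N) * (Nw w).card + ε * (p * N / 2)
        ≤ ((Nw w ∩ U).card : ℝ) := by
      intro w hw
      rw [hBpdef, Finset.mem_filter] at hw
      have h1 : (U.card : ℝ) / N + ε ≤ ((Nw w ∩ U).card : ℝ) / (Nw w).card := by
        have := hw.2; rw [hf] at this; simp only at this; linarith
      have h2 : ((U.card : ℝ) / N + ε) * (Nw w).card ≤ ((Nw w ∩ U).card : ℝ) := by
        have := mul_le_mul_of_nonneg_right h1 (le_of_lt (hdw w))
        rwa [div_mul_cancel₀ _ (ne_of_gt (hdw w))] at this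
      nlinarith [hdeg w, hdw w]
    have hsum := Finset.sum_le_sum hlow
    rw [Finset.sum_add_distrib, Finset.sum_const, ← Finset.mul_sum, nsmul_eq_mul] at hsum
    have hdisc1 := hdisc U Bp
    have hdisc2 := hdisc Finset.univ Bp
    simp only [hinter, Finset.card_univ, hN] at hdisc2
    rw [abs_le] at hdisc1 hdisc2
    set S := ∑ w ∈ Bp, ((Nw w ∩ U).card : ℝ)
    set T := ∑ w ∈ Bp, ((Nw w).card : ℝ)
    have hTlow : p * (N:ℝ) * Bp.card - δ * N * M ≤ T := by linarith [hdisc2.1]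
    have hprod : ((U.card : ℝ) / N) * (p * N * Bp.card - δ * N * M)
        ≤ ((U.card : ℝ) / N) * T := mul_le_mul_of_nonneg_left hTlow hcN0
    have hexp : ((U.card : ℝ) / N) * (p * N * Bp.card - δ * N * M)
        = p * U.card * Bp.card - ((U.card : ℝ) / N) * (δ * N * M) := by
      field_simp
    rw [hexp] at hprod
    linarith [hdisc1.2, hsum, hprod, hd]
  -- bound on Bm
  have hBmbound : (Bm.card : ℝ) * (ε * p * N / 2) ≤ 2 * (δ * N * M) := by
    have hhigh : ∀ w ∈ Bm, ((Nw w ∩ U).card : ℝ)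
        ≤ ((U.card : ℝ) / N) * (Nw w).card - ε * (p * N / 2) := by
      intro w hw
      rw [hBmdef, Finset.mem_filter] at hw
      have h1 : ((Nw w ∩ U).card : ℝ) / (Nw w).card ≤ (U.card : ℝ) / N - ε := by
        have := hw.2; rw [hf] at this; simp only at this; linarith
      have h2 : ((Nw w ∩ U).card : ℝ) ≤ ((U.card : ℝ) / N - ε) * (Nw w).card := by
        have := mul_le_mul_of_nonneg_right h1 (le_of_lt (hdw w))
        rwa [div_mul_cancel₀ _ (ne_of_gt (hdw w))] at this
      nlinarith [hdeg w, hdw w]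
    have hsum := Finset.sum_le_sum hhigh
    rw [Finset.sum_sub_distrib, Finset.sum_const, ← Finset.mul_sum, nsmul_eq_mul] at hsum
    have hdisc1 := hdisc U Bm
    have hdisc2 := hdisc Finset.univ Bm
    simp only [hinter, Finset.card_univ, hN] at hdisc2
    rw [abs_le] at hdisc1 hdisc2
    set S := ∑ w ∈ Bm, ((Nw w ∩ U).card : ℝ)
    set T := ∑ w ∈ Bm, ((Nw w).card : ℝ)
    have hThigh : T ≤ p * (N:ℝ) * Bm.card + δ * N * M := by linarith [hdisc2.2]
    have hprod : ((U.card : ℝ) / N) * T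
        ≤ ((U.card : ℝ) / N) * (p * N * Bm.card + δ * N * M) :=
      mul_le_mul_of_nonneg_left hThigh hcN0
    have hexp : ((U.card : ℝ) / N) * (p * N * Bm.card + δ * N * M)
        = p * U.card * Bm.card + ((U.card : ℝ) / N) * (δ * N * M) := by
      field_simp
    rw [hexp] at hprod
    linarith [hdisc1.1, hsum, hprod, hd]
  -- combine
  have hsubset : (Finset.univ.filter (fun w : W =>
      ε ≤ |((Nw w ∩ U).card : ℝ) / (Nw w).card - (U.card : ℝ) / N|)) ⊆ Bp ∪ Bm := by
    intro w hw
    rw [Finset.mem_filter] at hw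
    rw [Finset.mem_union, hBpdef, hBmdef, Finset.mem_filter, Finset.mem_filter]
    rcases le_abs.mp hw.2 with h | h
    · exact Or.inl ⟨Finset.mem_univ w, h⟩
    · exact Or.inr ⟨Finset.mem_univ w, by simp only [hf]; linarith⟩
  have hcardle : ((Finset.univ.filter (fun w : W =>
      ε ≤ |((Nw w ∩ U).card : ℝ) / (Nw w).card - (U.card : ℝ) / N|)).card : ℝ)
      ≤ (Bp.card : ℝ) + (Bm.card : ℝ) := by
    have h1 := Finset.card_le_card hsubset
    have h2 := Finset.card_union_le Bp Bm
    exact_mod_cast le_trans h1 h2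
  have hεp : (0:ℝ) < ε * p := mul_pos hε hp0
  rw [le_div_iff₀ hεp]
  nlinarith [mul_le_mul_of_nonneg_right hcardle (show (0:ℝ) ≤ ε * p * N / 2 by positivity),
    hBpbound, hBmbound, hn]
end
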